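/- arXiv:1602.07398 — 2 statements merged into one kernel-verified Lean document; each statement's English description precedes it below -/
import Mathlib

section
/- Fast-switching limit of the flux: for each r > 0 let (v₀ʳ, v₁ʳ) be a solution of the insect-respiration BVP at rate r and let F(r) = D·((v₀ʳ)'(0) + (v₁ʳ)'(0)). Then F(r) → D·c/L as r → ∞. That is, no matter how small the fixed proportion ρ ∈ (0,1) of time spent open is, in the fast-switching limit the mean oxygen flux to the tissue converges to the flux Dc/L of the always-open (pure Dirichlet) problem — an insect can keep its spiracles open a small proportion of time yet receive essentially as much oxygen as if they were always open, provided they open and close with high frequency. -/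
open Set Filter Topology Real

/-!
Adding the two equations shows that `v₀ + v₁` has zero second derivative, so it is affine with
slope the total flux `s = v₀'(0) + v₁'(0)`; with `v₁'(L) = 0` this gives `v₀'(L) = s` and
`v₁(L) = sL - ρc`. The combination `u = (1 - ρ)v₀ - ρv₁` satisfies `u'' = k²u` with `k² = r/D`
and `u(0) = 0`, hence `u'(L) sinh(kL) = k u(L) cosh(kL)`. Substituting the boundary values,
`s ((1 - ρ) tanh(kL)/k + ρL) = ρc`, and `tanh(kL)/k → 0` as `r → ∞`.
-/

lemma eqOn_Icc_of_hasDerivAt_zero {f : ℝ → ℝ} {a b : ℝ}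
    (hf : ∀ x ∈ Icc a b, HasDerivAt f 0 x) : ∀ x ∈ Icc a b, f x = f a :=
  constant_of_has_deriv_right_zero (fun x hx => (hf x hx).continuousAt.continuousWithinAt)
    fun x hx => (hf x (Ico_subset_Icc_self hx)).hasDerivWithinAt

lemma ContDiffOn.hasDerivAt_deriv_and_deriv_deriv {f : ℝ → ℝ} {s : Set ℝ} (hs : IsOpen s)
    (hf : ContDiffOn ℝ 2 f s) {x : ℝ} (hx : x ∈ s) :
    HasDerivAt f (deriv f x) x ∧ HasDerivAt (deriv f) (deriv (deriv f) x) x :=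
  ⟨((hf.differentiableOn two_ne_zero).differentiableAt (hs.mem_nhds hx)).hasDerivAt,
    (((hf.deriv_of_isOpen (m := 1) hs (by norm_num)).differentiableOn one_ne_zero).differentiableAt
      (hs.mem_nhds hx)).hasDerivAt⟩

lemma affine_of_hasDerivAt_deriv_zero {f f' : ℝ → ℝ} {a b : ℝ} (hab : a ≤ b)
    (hf : ∀ x ∈ Icc a b, HasDerivAt f (f' x) x) (hf' : ∀ x ∈ Icc a b, HasDerivAt f' 0 x) :
    f' b = f' a ∧ f b = f a + f' a * (b - a) := by
  have hslope := eqOn_Icc_of_hasDerivAt_zero hf'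
  have hline : ∀ x ∈ Icc a b, HasDerivAt (fun y => f y - f' a * y) 0 x := fun x hx =>
    ((hf x hx).sub ((hasDerivAt_id x).const_mul (f' a))).congr_deriv (by rw [hslope x hx]; ring)
  have hb : b ∈ Icc a b := ⟨hab, le_rfl⟩
  refine ⟨hslope b hb, ?_⟩
  linear_combination eqOn_Icc_of_hasDerivAt_zero hline b hb

/-- `u' sinh(kx) - k u cosh(kx)` is constant along solutions of `u'' = k²u`. -/
lemma deriv_mul_sinh_eq_of_hasDerivAt_deriv_eq_sq_mul {u u' : ℝ → ℝ} {k L : ℝ}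
    (hu : ∀ x ∈ Icc 0 L, HasDerivAt u (u' x) x)
    (hu' : ∀ x ∈ Icc 0 L, HasDerivAt u' (k ^ 2 * u x) x) (hu0 : u 0 = 0) (hL : 0 ≤ L) :
    u' L * sinh (k * L) = k * u L * cosh (k * L) := by
  have hψ : ∀ x ∈ Icc 0 L,
      HasDerivAt (fun y => u' y * sinh (k * y) - k * u y * cosh (k * y)) 0 x := fun x hx => by
    have hkx : HasDerivAt (fun y => k * y) k x := by simpa using (hasDerivAt_id x).const_mul k
    exact (((hu' x hx).mul ((hasDerivAt_sinh _).comp x hkx)).sub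
      (((hu x hx).const_mul k).mul ((hasDerivAt_cosh _).comp x hkx))).congr_deriv (by
        simp only [Function.comp_apply]; ring)
  have := eqOn_Icc_of_hasDerivAt_zero hψ L ⟨hL, le_rfl⟩
  simp only [mul_zero, sinh_zero, cosh_zero, hu0] at this
  linear_combination this

lemma flux_mul_eq_of_bvp {L D c ρ k : ℝ} {f₀ f₁ : ℝ → ℝ} (hL : 0 ≤ L) (hD : D ≠ 0)
    (hf₀ : ∀ x ∈ Icc 0 L, HasDerivAt f₀ (deriv f₀ x) x ∧
      HasDerivAt (deriv f₀) (deriv (deriv f₀) x) x)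
    (hf₁ : ∀ x ∈ Icc 0 L, HasDerivAt f₁ (deriv f₁ x) x ∧
      HasDerivAt (deriv f₁) (deriv (deriv f₁) x) x)
    (hode₀ : ∀ x ∈ Icc 0 L,
      D * deriv (deriv f₀) x = (1 - ρ) * (D * k ^ 2) * f₀ x - ρ * (D * k ^ 2) * f₁ x)
    (hode₁ : ∀ x ∈ Icc 0 L,
      D * deriv (deriv f₁) x = ρ * (D * k ^ 2) * f₁ x - (1 - ρ) * (D * k ^ 2) * f₀ x)
    (hbc₀ : f₀ 0 = 0) (hbc₁ : f₁ 0 = 0) (hbc₂ : deriv f₁ L = 0) (hbc₃ : f₀ L = ρ * c) :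
    (deriv f₀ 0 + deriv f₁ 0) * ((1 - ρ) * sinh (k * L) + ρ * k * L * cosh (k * L)) =
      ρ * k * c * cosh (k * L) := by
  obtain ⟨hflux, hmass⟩ := affine_of_hasDerivAt_deriv_zero (f := f₀ + f₁)
    (f' := fun x => deriv f₀ x + deriv f₁ x) hL
    (fun x hx => (hf₀ x hx).1.add (hf₁ x hx).1)
    fun x hx => by
      refine ((hf₀ x hx).2.add (hf₁ x hx).2).congr_deriv ?_
      have hD' : D * (deriv (deriv f₀) x + deriv (deriv f₁) x) = 0 := by
        linear_combination hode₀ x hx + hode₁ x hx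
      exact (mul_eq_zero.mp hD').resolve_left hD
  have hu := deriv_mul_sinh_eq_of_hasDerivAt_deriv_eq_sq_mul (k := k)
    (u := fun x => (1 - ρ) * f₀ x - ρ * f₁ x) (u' := fun x => (1 - ρ) * deriv f₀ x - ρ * deriv f₁ x)
    (fun x hx => ((hf₀ x hx).1.const_mul _).sub ((hf₁ x hx).1.const_mul _))
    (fun x hx => by
      refine (((hf₀ x hx).2.const_mul (1 - ρ)).sub ((hf₁ x hx).2.const_mul ρ)).congr_deriv ?_
      refine mul_left_cancel₀ hD ?_
      linear_combination (1 - ρ) * hode₀ x hx - ρ * hode₁ x hx)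
    (by simp [hbc₀, hbc₁]) hL
  simp only [Pi.add_apply, hbc₀, hbc₁, hbc₂, hbc₃] at hflux hmass hu
  linear_combination hu - (1 - ρ) * sinh (k * L) * hflux - ρ * k * cosh (k * L) * hmass

lemma tendsto_tanh_mul_div_atTop (L : ℝ) :
    Tendsto (fun k => tanh (k * L) / k) atTop (𝓝 0) := by
  refine squeeze_zero_norm' ?_ tendsto_inv_atTop_zero
  filter_upwards [eventually_gt_atTop 0] with k hk
  rw [norm_div, Real.norm_of_nonneg hk.le, div_le_iff₀ hk, inv_mul_cancel₀ hk.ne']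
  exact abs_le.mpr ⟨(neg_one_lt_tanh _).le, (tanh_lt_one _).le⟩

theorem insect_flux_fast_switching_limit_general
    (L D c ρ : ℝ) (hL : 0 < L) (hD : 0 < D) (hρ : ρ ∈ Set.Ioo (0:ℝ) 1)
    (v₀ v₁ : ℝ → ℝ → ℝ)
    (hreg : ∀ r > (0:ℝ), ∃ a b : ℝ, a < 0 ∧ L < b ∧
      ContDiffOn ℝ 2 (v₀ r) (Set.Ioo a b) ∧ ContDiffOn ℝ 2 (v₁ r) (Set.Ioo a b))
    (hode0 : ∀ r > (0:ℝ), ∀ x ∈ Set.Icc (0:ℝ) L,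
      D * deriv (deriv (v₀ r)) x = (1 - ρ) * r * v₀ r x - ρ * r * v₁ r x)
    (hode1 : ∀ r > (0:ℝ), ∀ x ∈ Set.Icc (0:ℝ) L,
      D * deriv (deriv (v₁ r)) x = ρ * r * v₁ r x - (1 - ρ) * r * v₀ r x)
    (hbc0 : ∀ r > (0:ℝ), v₀ r 0 = 0) (hbc1 : ∀ r > (0:ℝ), v₁ r 0 = 0)
    (hbc2 : ∀ r > (0:ℝ), deriv (v₁ r) L = 0) (hbc3 : ∀ r > (0:ℝ), v₀ r L = ρ * c) :
    Filter.Tendsto (fun r => D * (deriv (v₀ r) 0 + deriv (v₁ r) 0))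
      Filter.atTop (nhds (D * c / L)) := by
  obtain ⟨hρ0, hρ1⟩ := hρ
  set k : ℝ → ℝ := fun r => √(r / D)
  set den : ℝ → ℝ := fun r => (1 - ρ) * (tanh (k r * L) / k r) + ρ * L
  have hden : Tendsto den atTop (𝓝 (ρ * L)) := by
    have hk : Tendsto k atTop atTop := tendsto_sqrt_atTop.comp (tendsto_id.atTop_div_const hD)
    simpa using (((tendsto_tanh_mul_div_atTop L).comp hk).const_mul (1 - ρ)).add_const (ρ * L)
  have hlim : Tendsto (fun r => D * (ρ * c / den r)) atTop (𝓝 (D * c / L)) := by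
    convert (hden.inv₀ (by positivity)).const_mul (D * ρ * c) using 2 with r
    · ring
    · field_simp
  refine hlim.congr' ?_
  filter_upwards [eventually_gt_atTop 0] with r hr
  obtain ⟨a, b, ha, hb, h₀, h₁⟩ := hreg r hr
  have hkr : 0 < k r := sqrt_pos.2 (div_pos hr hD)
  have hrk : D * k r ^ 2 = r := by rw [sq_sqrt (div_pos hr hD).le]; field_simp
  have hIcc : Icc 0 L ⊆ Ioo a b := Icc_subset_Ioo ha hb
  have hid := flux_mul_eq_of_bvp hL.le hD.ne'
    (fun x hx => h₀.hasDerivAt_deriv_and_deriv_deriv isOpen_Ioo (hIcc hx))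
    (fun x hx => h₁.hasDerivAt_deriv_and_deriv_deriv isOpen_Ioo (hIcc hx))
    (fun x hx => by rw [hrk]; exact hode0 r hr x hx) (fun x hx => by rw [hrk]; exact hode1 r hr x hx)
    (hbc0 r hr) (hbc1 r hr) (hbc2 r hr) (hbc3 r hr)
  have hsinh : 0 < sinh (k r * L) := sinh_pos_iff.2 (by positivity)
  have hρ1' : 0 < 1 - ρ := sub_pos.2 hρ1
  congr 1
  simp only [den, tanh_eq_sinh_div_cosh]
  rw [div_eq_iff (by positivity)]
  field_simp
  linear_combination -hid

/-- Fast-switching limit of the flux: if for each `r > 0` the pair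
`(v₀ r, v₁ r)` solves the insect-respiration BVP at rate `r`, then the flux
`F r = D·((v₀ r)'(0) + (v₁ r)'(0))` tends to `D·c/L` as `r → ∞`. -/
theorem insect_flux_fast_switching_limit
    (L D c ρ : ℝ) (hL : 0 < L) (hD : 0 < D) (hc : 0 < c) (hρ : ρ ∈ Set.Ioo (0:ℝ) 1)
    (v₀ v₁ : ℝ → ℝ → ℝ)
    (hreg : ∀ r > (0:ℝ), ∃ a b : ℝ, a < 0 ∧ L < b ∧
      ContDiffOn ℝ 2 (v₀ r) (Set.Ioo a b) ∧ ContDiffOn ℝ 2 (v₁ r) (Set.Ioo a b))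
    (hode0 : ∀ r > (0:ℝ), ∀ x ∈ Set.Icc (0:ℝ) L,
      D * deriv (deriv (v₀ r)) x = (1 - ρ) * r * v₀ r x - ρ * r * v₁ r x)
    (hode1 : ∀ r > (0:ℝ), ∀ x ∈ Set.Icc (0:ℝ) L,
      D * deriv (deriv (v₁ r)) x = ρ * r * v₁ r x - (1 - ρ) * r * v₀ r x)
    (hbc0 : ∀ r > (0:ℝ), v₀ r 0 = 0) (hbc1 : ∀ r > (0:ℝ), v₁ r 0 = 0)
    (hbc2 : ∀ r > (0:ℝ), deriv (v₁ r) L = 0) (hbc3 : ∀ r > (0:ℝ), v₀ r L = ρ * c) :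
    Filter.Tendsto (fun r => D * (deriv (v₀ r) 0 + deriv (v₁ r) 0))
      Filter.atTop (nhds (D * c / L)) :=
  insect_flux_fast_switching_limit_general L D c ρ hL hD hρ v₀ v₁ hreg hode0 hode1 hbc0 hbc1 hbc2
    hbc3
end

section
/- Slow-switching limit of the flux: for each r > 0 let (v₀ʳ, v₁ʳ) be a solution of the insect-respiration BVP at rate r and let F(r) = D·((v₀ʳ)'(0) + (v₁ʳ)'(0)). Then F(r) → ρ·D·c/L as r → 0⁺, i.e. in the slow-switching limit the mean flux converges to the proportion-weighted average ρ·(Dc/L) of the fluxes of the static open and closed problems. -/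
/-!
The sum `w = v₀ + v₁` solves `w'' = 0` and the weighted difference
`z = (1 - ρ) v₀ - ρ v₁` solves `z'' = k² z` with `k = √(r / D)`, both vanishing at `0`;
hence `w = w'(0) x` and `k z = z'(0) sinh (k x)`. The two remaining boundary conditions then give
`F · (ρ L cosh (k L) + (1 - ρ) sinh (k L) / k) = D ρ c cosh (k L)`,
and as `r → 0⁺` the bracket tends to `L` because `sinh (k L) / k → L`.
-/

open Real Filter Set Topology

lemma eq_of_hasDerivAt_zero_on_Icc {F : ℝ → ℝ} {a b : ℝ} (hab : a ≤ b)
    (hF : ∀ x ∈ Icc a b, HasDerivAt F 0 x) : F b = F a :=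
  constant_of_has_deriv_right_zero (fun x hx => (hF x hx).continuousAt.continuousWithinAt)
    (fun x hx => (hF x (Ico_subset_Icc_self hx)).hasDerivWithinAt) b (right_mem_Icc.2 hab)

lemma eq_add_mul_of_hasDerivAt_zero {u u' : ℝ → ℝ} {L : ℝ} (hL : 0 ≤ L)
    (hu : ∀ x ∈ Icc 0 L, HasDerivAt u (u' x) x) (hu' : ∀ x ∈ Icc 0 L, HasDerivAt u' 0 x) :
    u L = u 0 + u' 0 * L ∧ u' L = u' 0 := by
  have hconst : ∀ x ∈ Icc 0 L, u' x = u' 0 := fun x hx =>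
    eq_of_hasDerivAt_zero_on_Icc hx.1 fun y hy => hu' y ⟨hy.1, hy.2.trans hx.2⟩
  refine ⟨?_, hconst L (right_mem_Icc.2 hL)⟩
  have := eq_of_hasDerivAt_zero_on_Icc (F := fun x => u x - u' 0 * x) hL fun x hx =>
    ((hu x hx).sub ((hasDerivAt_id' x).const_mul (u' 0))).congr_deriv (by simp [hconst x hx])
  simp only [mul_zero, sub_zero] at this
  linarith

lemma eq_cosh_sinh_of_hasDerivAt_sq_mul {u u' : ℝ → ℝ} {k L : ℝ} (hL : 0 ≤ L)
    (hu : ∀ x ∈ Icc 0 L, HasDerivAt u (u' x) x)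
    (hu' : ∀ x ∈ Icc 0 L, HasDerivAt u' (k ^ 2 * u x) x) :
    u' L = u' 0 * cosh (k * L) + k * u 0 * sinh (k * L) ∧
      k * u L = k * u 0 * cosh (k * L) + u' 0 * sinh (k * L) := by
  have hcosh (x : ℝ) : HasDerivAt (fun y => cosh (k * y)) (sinh (k * x) * k) x := by
    simpa using ((hasDerivAt_id' x).const_mul k).cosh
  have hsinh (x : ℝ) : HasDerivAt (fun y => sinh (k * y)) (cosh (k * x) * k) x := by
    simpa using ((hasDerivAt_id' x).const_mul k).sinh
  -- the Wronskians of `u` against `sinh (k x)` and `cosh (k x)` are conserved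
  have hP := eq_of_hasDerivAt_zero_on_Icc
      (F := fun x => u' x * cosh (k * x) - k * u x * sinh (k * x)) hL fun x hx =>
    (((hu' x hx).mul (hcosh x)).sub (((hu x hx).const_mul k).mul (hsinh x))).congr_deriv
      (by ring)
  have hQ := eq_of_hasDerivAt_zero_on_Icc
      (F := fun x => k * u x * cosh (k * x) - u' x * sinh (k * x)) hL fun x hx =>
    ((((hu x hx).const_mul k).mul (hcosh x)).sub ((hu' x hx).mul (hsinh x))).congr_deriv
      (by ring)
  simp only [mul_zero, cosh_zero, sinh_zero, mul_one, sub_zero] at hP hQ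
  have hid := cosh_sq_sub_sinh_sq (k * L)
  constructor
  · linear_combination cosh (k * L) * hP + sinh (k * L) * hQ - u' L * hid
  · linear_combination sinh (k * L) * hP + cosh (k * L) * hQ - k * u L * hid

lemma ContDiffOn.hasDerivAt_and_hasDerivAt_deriv {𝕜 F : Type*} [NontriviallyNormedField 𝕜]
    [NormedAddCommGroup F] [NormedSpace 𝕜 F] {f : 𝕜 → F} {s : Set 𝕜} (hs : IsOpen s)
    (hf : ContDiffOn 𝕜 2 f s) {x : 𝕜} (hx : x ∈ s) :
    HasDerivAt f (deriv f x) x ∧ HasDerivAt (deriv f) (deriv (deriv f) x) x :=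
  ⟨((hf.differentiableOn two_ne_zero).differentiableAt (hs.mem_nhds hx)).hasDerivAt,
    (((hf.deriv_of_isOpen hs (by norm_num : (1 : WithTop ℕ∞) + 1 ≤ 2)).differentiableOn
      one_ne_zero).differentiableAt (hs.mem_nhds hx)).hasDerivAt⟩

theorem insectBVP_flux_mul_eq {L D c ρ r : ℝ} (hL : 0 ≤ L) (hD : 0 < D) (hr : 0 < r)
    {f g : ℝ → ℝ} {s : Set ℝ} (hs : IsOpen s) (hLs : Icc 0 L ⊆ s)
    (hf : ContDiffOn ℝ 2 f s) (hg : ContDiffOn ℝ 2 g s)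
    (hode0 : ∀ x ∈ Icc 0 L, D * deriv (deriv f) x = (1 - ρ) * r * f x - ρ * r * g x)
    (hode1 : ∀ x ∈ Icc 0 L, D * deriv (deriv g) x = ρ * r * g x - (1 - ρ) * r * f x)
    (hf0 : f 0 = 0) (hg0 : g 0 = 0) (hg'L : deriv g L = 0) (hfL : f L = ρ * c) :
    D * (deriv f 0 + deriv g 0) *
        (ρ * L * cosh (√(r / D) * L) + (1 - ρ) * (sinh (√(r / D) * L) / √(r / D))) =
      D * ρ * c * cosh (√(r / D) * L) := by
  set k := √(r / D)
  have hk : 0 < k := sqrt_pos.2 (div_pos hr hD)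
  have hk2 : D * k ^ 2 = r := by rw [sq_sqrt (div_pos hr hD).le]; field_simp
  have hf' x (hx : x ∈ Icc 0 L) := hf.hasDerivAt_and_hasDerivAt_deriv hs (hLs hx)
  have hg' x (hx : x ∈ Icc 0 L) := hg.hasDerivAt_and_hasDerivAt_deriv hs (hLs hx)
  obtain ⟨hwL, hw'L⟩ := eq_add_mul_of_hasDerivAt_zero (u := fun x => f x + g x) hL
    (fun x hx => (hf' x hx).1.add (hg' x hx).1)
    (fun x hx => ((hf' x hx).2.add (hg' x hx).2).congr_deriv <| mul_left_cancel₀ hD.ne' <| by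
      linear_combination hode0 x hx + hode1 x hx)
  obtain ⟨hz'L, hzL⟩ := eq_cosh_sinh_of_hasDerivAt_sq_mul (k := k)
    (u := fun x => (1 - ρ) * f x - ρ * g x) hL
    (fun x hx => ((hf' x hx).1.const_mul _).sub ((hg' x hx).1.const_mul _))
    (fun x hx => (((hf' x hx).2.const_mul _).sub ((hg' x hx).2.const_mul _)).congr_deriv <|
      mul_left_cancel₀ hD.ne' <| by
        linear_combination (1 - ρ) * hode0 x hx - ρ * hode1 x hx
          - ((1 - ρ) * f x - ρ * g x) * hk2)
  simp only [hf0, hg0, hg'L, hfL, mul_zero, sub_zero, add_zero, zero_mul] at hwL hw'L hz'L hzL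
  have hw'0 : (deriv f 0 + deriv g 0) * (ρ * L * cosh (k * L) * k + (1 - ρ) * sinh (k * L)) =
      ρ * c * cosh (k * L) * k := by
    linear_combination -(1 - ρ) * sinh (k * L) * hw'L + sinh (k * L) * hz'L
      - cosh (k * L) * hzL - cosh (k * L) * k * ρ * hwL
  calc _ = D * ((deriv f 0 + deriv g 0) * (ρ * L * cosh (k * L) * k + (1 - ρ) * sinh (k * L)))
        / k := by field_simp
    _ = _ := by rw [hw'0]; field_simp

lemma tendsto_sinh_mul_div_self (L : ℝ) :
    Tendsto (fun k => sinh (k * L) / k) (𝓝[≠] 0) (𝓝 L) := by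
  have h : HasDerivAt (fun k => sinh (k * L)) L 0 := by
    simpa using ((hasDerivAt_mul_const L).sinh : HasDerivAt (fun k => sinh (k * L)) _ 0)
  exact h.tendsto_slope.congr fun k => by simp [slope_def_field]

lemma tendsto_sqrt_div_nhdsGT_zero {D : ℝ} (hD : 0 < D) :
    Tendsto (fun r => √(r / D)) (𝓝[>] 0) (𝓝[>] 0) :=
  tendsto_nhdsWithin_iff.2
    ⟨(((continuous_id.div_const D).sqrt).tendsto' 0 0 (by simp)).mono_left nhdsWithin_le_nhds,
      eventually_mem_nhdsWithin.mono fun _ hr => sqrt_pos.2 (div_pos hr hD)⟩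

theorem insect_flux_slow_switching_limit_general
    (L D c ρ : ℝ) (hL : 0 < L) (hD : 0 < D)
    (v₀ v₁ : ℝ → ℝ → ℝ)
    (hreg : ∀ r > (0:ℝ), ∃ a b : ℝ, a < 0 ∧ L < b ∧
      ContDiffOn ℝ 2 (v₀ r) (Set.Ioo a b) ∧ ContDiffOn ℝ 2 (v₁ r) (Set.Ioo a b))
    (hode0 : ∀ r > (0:ℝ), ∀ x ∈ Set.Icc (0:ℝ) L,
      D * deriv (deriv (v₀ r)) x = (1 - ρ) * r * v₀ r x - ρ * r * v₁ r x)
    (hode1 : ∀ r > (0:ℝ), ∀ x ∈ Set.Icc (0:ℝ) L,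
      D * deriv (deriv (v₁ r)) x = ρ * r * v₁ r x - (1 - ρ) * r * v₀ r x)
    (hbc0 : ∀ r > (0:ℝ), v₀ r 0 = 0) (hbc1 : ∀ r > (0:ℝ), v₁ r 0 = 0)
    (hbc2 : ∀ r > (0:ℝ), deriv (v₁ r) L = 0) (hbc3 : ∀ r > (0:ℝ), v₀ r L = ρ * c) :
    Filter.Tendsto (fun r => D * (deriv (v₀ r) 0 + deriv (v₁ r) 0))
      (nhdsWithin 0 (Set.Ioi 0)) (nhds (ρ * D * c / L)) := by
  have hcosh : Tendsto (fun k => cosh (k * L)) (𝓝[≠] 0) (𝓝 1) := by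
    have : Continuous fun k => cosh (k * L) := by fun_prop
    exact (this.tendsto' 0 1 (by simp)).mono_left nhdsWithin_le_nhds
  have hden : Tendsto (fun k => ρ * L * cosh (k * L) + (1 - ρ) * (sinh (k * L) / k))
      (𝓝[≠] 0) (𝓝 L) := by
    convert (hcosh.const_mul (ρ * L)).add ((tendsto_sinh_mul_div_self L).const_mul (1 - ρ))
      using 2
    ring
  have hk := (tendsto_sqrt_div_nhdsGT_zero hD).mono_right (nhdsGT_le_nhdsNE 0)
  have hlim := ((hcosh.const_mul (D * ρ * c)).div hden hL.ne').comp hk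
  have hflux : ∀ᶠ r in 𝓝[>] 0, D * ρ * c * cosh (√(r / D) * L) /
      (ρ * L * cosh (√(r / D) * L) + (1 - ρ) * (sinh (√(r / D) * L) / √(r / D))) =
        D * (deriv (v₀ r) 0 + deriv (v₁ r) 0) := by
    filter_upwards [self_mem_nhdsWithin, (hden.comp hk).eventually_ne hL.ne'] with r hr hne
    obtain ⟨a, b, ha, hb, h₀, h₁⟩ := hreg r hr
    exact div_eq_of_eq_mul hne (insectBVP_flux_mul_eq hL.le hD hr isOpen_Ioo
      (fun x hx => ⟨ha.trans_le hx.1, hx.2.trans_lt hb⟩) h₀ h₁ (hode0 r hr) (hode1 r hr)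
      (hbc0 r hr) (hbc1 r hr) (hbc2 r hr) (hbc3 r hr)).symm
  convert hlim.congr' hflux using 2
  ring

/-- Slow-switching limit of the flux: if for each `r > 0` the pair
`(v₀ r, v₁ r)` solves the insect-respiration BVP at rate `r`, then the flux
`F r = D·((v₀ r)'(0) + (v₁ r)'(0))` tends to `ρ·D·c/L` as `r → 0⁺`. -/
theorem insect_flux_slow_switching_limit
    (L D c ρ : ℝ) (hL : 0 < L) (hD : 0 < D) (hc : 0 < c) (hρ : ρ ∈ Set.Ioo (0:ℝ) 1)
    (v₀ v₁ : ℝ → ℝ → ℝ)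
    (hreg : ∀ r > (0:ℝ), ∃ a b : ℝ, a < 0 ∧ L < b ∧
      ContDiffOn ℝ 2 (v₀ r) (Set.Ioo a b) ∧ ContDiffOn ℝ 2 (v₁ r) (Set.Ioo a b))
    (hode0 : ∀ r > (0:ℝ), ∀ x ∈ Set.Icc (0:ℝ) L,
      D * deriv (deriv (v₀ r)) x = (1 - ρ) * r * v₀ r x - ρ * r * v₁ r x)
    (hode1 : ∀ r > (0:ℝ), ∀ x ∈ Set.Icc (0:ℝ) L,
      D * deriv (deriv (v₁ r)) x = ρ * r * v₁ r x - (1 - ρ) * r * v₀ r x)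
    (hbc0 : ∀ r > (0:ℝ), v₀ r 0 = 0) (hbc1 : ∀ r > (0:ℝ), v₁ r 0 = 0)
    (hbc2 : ∀ r > (0:ℝ), deriv (v₁ r) L = 0) (hbc3 : ∀ r > (0:ℝ), v₀ r L = ρ * c) :
    Filter.Tendsto (fun r => D * (deriv (v₀ r) 0 + deriv (v₁ r) 0))
      (nhdsWithin 0 (Set.Ioi 0)) (nhds (ρ * D * c / L)) :=
  insect_flux_slow_switching_limit_general L D c ρ hL hD v₀ v₁ hreg hode0 hode1 hbc0 hbc1 hbc2 hbc3
end
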